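/- Fix k_T ≥ 1 and an initial register value d0 ∈ D. For every word w ∈ (2^(I ∪ O ∪ Asgn^T) × D × D)^ω: w is accepted by T_all if and only if there exists a k_T-register transducer T (with initial register value d0, possibly with infinitely many states) such that w ∈ L(T'), where T' denotes T with its Boolean output at each step extended by the Asgn^T signals recording exactly T's assignment action at that step. -/
import Mathlib


/-- A `k`-register transducer with Boolean inputs `I`, Boolean outputs `O`,
data-domain `D` and (possibly infinite) state set `S`.  The transition function reads
the Boolean inputs and the guard (comparisons of the data-input with the registers) and
returns the Boolean outputs, the index of the register whose current value is output on
the data-output, the assignment, and the successor state. -/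
structure RegTransducer (I O D S : Type) (k : ℕ) where
  s0 : S
  d0 : D
  tr : S → (I → Bool) → (Fin k → Bool) → (O → Bool) × Fin k × (Fin k → Bool) × S

/-- The register values of the automaton `T_all` along a word: registers start at `d0`
and the value of the data-input is stored into exactly the registers named by the
`Asgn^T` signals of the letter. -/
def tallRegs {D : Type} {kT : ℕ} (d0 : D) (asg : ℕ → Fin kT → Bool) (di : ℕ → D) :
    ℕ → Fin kT → D
  | 0 => fun _ => d0
  | j + 1 => fun n => if asg j n then di j else tallRegs d0 asg di j n

/-- `w` (given by its components `lio : I∪O`-letters, `asg : Asgn^T`-letters and data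
values `di, dout`) is a word of the transducer `T` extended with the `Asgn^T` signals
recording exactly `T`'s assignment action at each step. -/
def IsExtWordOf {I O D S : Type} [DecidableEq D] {kT : ℕ} (T : RegTransducer I O D S kT)
    (lio : ℕ → (I ⊕ O) → Bool) (asg : ℕ → Fin kT → Bool) (di dout : ℕ → D) : Prop :=
  ∃ (st : ℕ → S) (regs : ℕ → Fin kT → D),
    st 0 = T.s0 ∧ (∀ n, regs 0 n = T.d0) ∧
    ∀ j,
      let r := T.tr (st j) (fun a => lio j (Sum.inl a)) (fun n => decide (di j = regs j n))
      st (j + 1) = r.2.2.2 ∧ (∀ b, lio j (Sum.inr b) = r.1 b) ∧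
      (∀ n, asg j n = r.2.2.1 n) ∧ dout j = regs j r.2.1 ∧
      (∀ n, regs (j + 1) n = if r.2.2.1 n then di j else regs j n)

/-- a word over `2^(I ∪ O ∪ Asgn^T) × D × D` is accepted by `T_all`
(its unique run never reaches `⊥`, i.e. at every step the value of the data-output equals
the current value of some register, the registers being updated exactly as dictated by
the `Asgn^T` signals) iff it is the word of some `k_T`-register transducer, possibly with
infinitely many states, extended with its assignment actions. -/
theorem stmt6 (D I O : Type) [Infinite D] [DecidableEq D] [Finite I] [Finite O]
    (kT : ℕ) (hkT : 1 ≤ kT) (d0 : D)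
    (lio : ℕ → (I ⊕ O) → Bool) (asg : ℕ → Fin kT → Bool) (di dout : ℕ → D) :
    (∀ j, ∃ n, dout j = tallRegs d0 asg di j n) ↔
    (∃ (S : Type) (T : RegTransducer I O D S kT),
      T.d0 = d0 ∧ IsExtWordOf T lio asg di dout) := by
  constructor
  · intro h
    refine ⟨ℕ, ⟨0, d0, fun j _ _ =>
      (fun b => lio j (Sum.inr b), Classical.choose (h j), asg j, j + 1)⟩, rfl,
      id, tallRegs d0 asg di, rfl, fun n => rfl, fun j => ?_⟩
    exact ⟨rfl, fun b => rfl, fun n => rfl, Classical.choose_spec (h j), fun n => rfl⟩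
  · rintro ⟨S, T, hd0, st, regs, hst0, hregs0, hstep⟩
    have key : ∀ j n, regs j n = tallRegs d0 asg di j n := by
      intro j
      induction j with
      | zero => intro n; rw [hregs0 n, hd0]; rfl
      | succ j ih =>
        intro n
        obtain ⟨_, _, hasg, _, hupd⟩ := hstep j
        rw [hupd n, ← hasg n, show tallRegs d0 asg di (j+1) n =
          if asg j n then di j else tallRegs d0 asg di j n from rfl, ih n]
    intro j
    obtain ⟨_, _, _, hout, _⟩ := hstep j
    exact ⟨_, by rw [hout, key]⟩
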